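/- arXiv:math/9709205 — 2 statements merged into one kernel-verified Lean document; each statement's English description precedes it below -/
import Mathlib

section
/- Under the standing setup, suppose β* < θ₁⁺ and h : S' → β* + 1 is a function such that for every club E of λ⁺ there are stationarily many δ ∈ S₁ ∩ S₂ with e_δ ⊆ E and |{ζ ≤ β* : E ∩ δ ∩ h⁻¹({ζ}) ∩ S' is stationary in δ}| ≥ θ₁. Then there exists γ* ≤ β* with cf(γ*) = ℵ₀ such that for every club E of λ⁺ there are stationarily many δ ∈ S₁ ∩ S₂ with e_δ ⊆ E and γ* = sup{ζ < γ* : h⁻¹({ζ}) ∩ S' ∩ E is stationary in δ}. -/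
/-!
Suppose no `γ* ≤ β*` of countable cofinality works: each such `γ` has a club `E_γ` of `λ⁺`
off which the required set of `δ` is nonstationary. There are fewer than `cf λ⁺ = λ⁺` of
them, so they meet in a club `E₀`, and shrinking `E` only shrinks the sets in question.
The hypothesis for `E₀` gives `δ ∈ E₀` with infinitely many `ζ ≤ β*` whose fibre of `h`
is stationary in `δ`; the supremum `γ` of an `ω`-sequence of such `ζ` has countable
cofinality, and `δ` contradicts the choice of `E_γ`.
-/

noncomputable section

/-- The order type of a set of ordinals (meaningful when `C` is small, i.e. bounded). -/
noncomputable def otp (C : Set Ordinal.{0}) : Ordinal.{0} := by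
  classical
  exact if h : Small.{0} C then
    letI := h
    haveI : IsWellOrder (Shrink C)
        (fun x y => ((equivShrink C).symm x : Ordinal) < ((equivShrink C).symm y : Ordinal)) :=
      RelEmbedding.isWellOrder
        (⟨⟨fun x => ((equivShrink C).symm x : Ordinal),
            fun a b hab => (equivShrink C).symm.injective (Subtype.coe_injective hab)⟩,
          Iff.rfl⟩ :
          (fun x y : Shrink C =>
              ((equivShrink C).symm x : Ordinal) < ((equivShrink C).symm y : Ordinal)) ↪r
            ((· < ·) : Ordinal → Ordinal → Prop))
    Ordinal.type
      (fun x y : Shrink C =>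
        ((equivShrink C).symm x : Ordinal) < ((equivShrink C).symm y : Ordinal))
  else 0

/-- `C` is closed in `δ`: any supremum of a nonempty subset of `C` that is `< δ` lies in `C`. -/
def IsClosedIn (C : Set Ordinal.{0}) (δ : Ordinal.{0}) : Prop :=
  ∀ s ⊆ C, s.Nonempty → sSup s < δ → sSup s ∈ C

/-- `C` is a club (closed unbounded) subset of `δ`. -/
def IsClubIn (C : Set Ordinal.{0}) (δ : Ordinal.{0}) : Prop :=
  C ⊆ Set.Iio δ ∧ (∀ β < δ, ∃ γ ∈ C, β ≤ γ) ∧ IsClosedIn C δ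

/-- `S` is stationary in `δ`: it meets every club of `δ`. -/
def IsStationaryIn (S : Set Ordinal.{0}) (δ : Ordinal.{0}) : Prop :=
  ∀ C, IsClubIn C δ → (S ∩ C).Nonempty

/-- The accumulation points of `C` that belong to `C`. -/
def accSet (C : Set Ordinal.{0}) : Set Ordinal.{0} :=
  {β ∈ C | β = sSup (C ∩ Set.Iio β)}

/-- The non-accumulation points of `C`. -/
def naccSet (C : Set Ordinal.{0}) : Set Ordinal.{0} := C \ accSet C

/-- `S_κ^δ`: the set of ordinals below `δ` of cofinality `κ`. -/
def cofSet (κ : Cardinal.{0}) (δ : Ordinal.{0}) : Set Ordinal.{0} :=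
  {α | α < δ ∧ α.cof = κ}

universe u

open Set Cardinal

theorem isClubIn_iff_isClub {C : Set Ordinal} {Λ : Ordinal} :
    IsClubIn C Λ ↔ C ⊆ Iio Λ ∧ IsClub ((↑) ⁻¹' C : Set (Iio Λ)) := by
  constructor
  · rintro ⟨hsub, hunb, hcl⟩
    refine ⟨hsub, fun d hd hne _ a ha => ?_, fun a => ?_⟩
    · have hsup : sSup (Subtype.val '' d) = a := by
        refine le_antisymm (csSup_le' ?_) (not_lt.1 fun hlt => ?_)
        · rintro _ ⟨x, hx, rfl⟩
          exact ha.1 hx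
        · have hub : (⟨_, hlt.trans a.2⟩ : Iio Λ) ∈ upperBounds d := fun x hx =>
            show x.1 ≤ _ from
              le_csSup ⟨a, by rintro _ ⟨y, hy, rfl⟩; exact ha.1 hy⟩ (mem_image_of_mem _ hx)
          exact (ha.2 hub).not_gt hlt
      have := hcl _ (image_subset_iff.2 hd) (hne.image _) (hsup ▸ a.2)
      rwa [hsup] at this
    · obtain ⟨γ, hγ, hle⟩ := hunb a a.2
      exact ⟨⟨γ, hsub hγ⟩, hγ, hle⟩
  · rintro ⟨hsub, hclub⟩
    refine ⟨hsub, fun β hβ => ?_, fun s hs hne hlt => ?_⟩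
    · obtain ⟨b, hb, hle⟩ := hclub.isCofinal ⟨β, hβ⟩
      exact ⟨b, hb, hle⟩
    · have hbdd : BddAbove s := ⟨Λ, fun y hy => (hsub (hs hy)).le⟩
      have hlub : IsLUB (Subtype.val ⁻¹' s : Set (Iio Λ)) ⟨sSup s, hlt⟩ :=
        ⟨fun x hx => le_csSup hbdd hx,
          fun b hb => csSup_le hne fun y hy => hb (a := ⟨y, hsub (hs hy)⟩) hy⟩
      obtain ⟨x, hx⟩ := hne
      exact hclub.isLUB_mem (preimage_mono hs) ⟨⟨x, hsub (hs hx)⟩, hx⟩ hlub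

theorem isClubIn_Iio (Λ : Ordinal) : IsClubIn (Iio Λ) Λ :=
  ⟨subset_rfl, fun β hβ => ⟨β, hβ, le_rfl⟩, fun _ _ _ hlt => hlt⟩

theorem Ordinal.cof_Iio_ne_aleph0 {Λ : Ordinal} (hΛ : Λ.cof ≠ ℵ₀) :
    Order.cof (Iio Λ) ≠ ℵ₀ := by
  simpa [Ordinal.cof_Iio, ← Ordinal.lift_cof] using hΛ

theorem IsClubIn.inter {A B : Set Ordinal} {Λ : Ordinal} (hΛ : Λ.cof ≠ ℵ₀)
    (hA : IsClubIn A Λ) (hB : IsClubIn B Λ) : IsClubIn (A ∩ B) Λ := by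
  rw [isClubIn_iff_isClub] at hA hB ⊢
  exact ⟨inter_subset_left.trans hA.1, hA.2.inter (Ordinal.cof_Iio_ne_aleph0 hΛ) hB.2⟩

theorem IsClubIn.iInter {ι : Type u} [Nonempty ι] {F : ι → Set Ordinal} {Λ : Ordinal}
    (hΛ : Λ.cof ≠ ℵ₀) (hι : #ι < Cardinal.lift.{u} Λ.cof)
    (hF : ∀ i, IsClubIn (F i) Λ) : IsClubIn (⋂ i, F i) Λ := by
  simp only [isClubIn_iff_isClub] at hF ⊢
  refine ⟨(iInter_subset _ (Classical.arbitrary ι)).trans (hF _).1, ?_⟩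
  rw [preimage_iInter]
  refine IsClub.iInter (Ordinal.cof_Iio_ne_aleph0 hΛ) ?_ fun i => (hF i).2
  simpa [Ordinal.cof_Iio, ← Ordinal.lift_cof] using Cardinal.lift_strictMono.{u, 1} hι

theorem IsStationaryIn.mono {S T : Set Ordinal} {δ : Ordinal} (hS : IsStationaryIn S δ)
    (hST : S ⊆ T) : IsStationaryIn T δ := fun C hC =>
  (hS C hC).mono (inter_subset_inter_left _ hST)

theorem exists_forall_isStationaryIn_of_forall_isClubIn {ι : Type u} {Λ : Ordinal}
    (hΛ : Λ.cof ≠ ℵ₀) (hι : #ι < Cardinal.lift.{u} Λ.cof)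
    (G : ι → Set Ordinal → Set Ordinal) (hG : ∀ i, Monotone (G i))
    (h : ∀ E, IsClubIn E Λ → ∃ i, (G i E ∩ E).Nonempty) :
    ∃ i, ∀ E, IsClubIn E Λ → IsStationaryIn (G i E) Λ := by
  by_contra! hns
  simp only [IsStationaryIn, not_forall, not_nonempty_iff_eq_empty] at hns
  choose E hE D hD hGD using hns
  have : Nonempty ι := (h _ (isClubIn_Iio Λ)).nonempty
  obtain ⟨i, δ, hδG, hδ⟩ := h (⋂ i, E i ∩ D i)
    (.iInter hΛ hι fun i => (hE i).inter hΛ (hD i))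
  exact (hGD i).subset
    ⟨hG i ((iInter_subset _ i).trans inter_subset_left) hδG, (mem_iInter.1 hδ i).2⟩

theorem Set.Infinite.exists_strictMono_mem {α : Type*} [LinearOrder α] [WellFoundedLT α]
    {s : Set α} (hs : s.Infinite) : ∃ f : ℕ → α, StrictMono f ∧ ∀ n, f n ∈ s := by
  let e := hs.natEmbedding s
  obtain ⟨g, hg⟩ := (isPWO_of_wellQuasiOrderedLE s).exists_monotone_subseq fun n => (e n).2
  exact ⟨_, hg.strictMono_of_injective
    (Subtype.val_injective.comp (e.injective.comp g.injective)), fun n => (e (g n)).2⟩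

theorem Set.Infinite.exists_cof_eq_aleph0_sSup_inter_Iio {W : Set Ordinal.{u}}
    (hW : W.Infinite) :
    ∃ γ : Ordinal, γ.cof = ℵ₀ ∧ sSup (W ∩ Iio γ) = γ := by
  obtain ⟨f, hf, hfW⟩ := hW.exists_strictMono_mem
  have hlt : ∀ n, f n < ⨆ n, f n := fun n =>
    (hf n.lt_succ_self).trans_le (Ordinal.le_iSup f _)
  refine ⟨⨆ n, f n, by simpa using Ordinal.lift_cof_iSup hf, le_antisymm ?_ ?_⟩
  · exact csSup_le' fun x hx => hx.2.le
  · exact Ordinal.iSup_le fun n =>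
      le_csSup ⟨_, fun x hx => hx.2.le⟩ ⟨hfW n, hlt n⟩

theorem Cardinal.mk_Iic_lt_lift_of_lt_ord {κ : Cardinal.{u}} (hκ : ℵ₀ ≤ κ)
    {β : Ordinal.{u}} (hβ : β < κ.ord) : #(Iic β) < lift.{u + 1} κ := by
  rw [← Order.Iio_succ, mk_Iio_ordinal, lift_lt, ← lt_ord]
  exact (isSuccLimit_ord hκ).succ_lt hβ

theorem csSup_eq_of_subset_of_subset_Iic {α : Type*} [ConditionallyCompleteLinearOrderBot α]
    {A B : Set α} {γ : α} (hAB : A ⊆ B) (hB : B ⊆ Iic γ) (hA : sSup A = γ) : sSup B = γ :=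
  le_antisymm (csSup_le' hB) (hA ▸ csSup_le_csSup' ⟨γ, hB⟩ hAB)

theorem stmt_4_general
    (lam θ₁ θ : Cardinal.{0})
    (hlamθ₁ : Order.succ θ₁ < lam) (hθ₁θ : θ ≤ θ₁)
    (hθ : Cardinal.aleph 1 < θ)
    (S₁ S₂ S' : Set Ordinal) (e : Ordinal → Set Ordinal)
    (βs : Ordinal) (hβs : βs < (Order.succ θ₁).ord)
    (h : Ordinal → Ordinal)
    (hyp : ∀ E, IsClubIn E (Order.succ lam).ord →
      IsStationaryIn {δ | δ ∈ S₁ ∩ S₂ ∧ e δ ⊆ E ∧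
        Cardinal.lift.{1} θ₁ ≤ Cardinal.mk
          {ζ : Ordinal | ζ ≤ βs ∧
            IsStationaryIn (E ∩ Set.Iio δ ∩ {α | α ∈ S' ∧ h α = ζ}) δ}}
        (Order.succ lam).ord) :
    ∃ γs ≤ βs, γs.cof = Cardinal.aleph0 ∧
      ∀ E, IsClubIn E (Order.succ lam).ord →
        IsStationaryIn {δ | δ ∈ S₁ ∩ S₂ ∧ e δ ⊆ E ∧
          γs = sSup {ζ | ζ < γs ∧
            IsStationaryIn ({α | α ∈ S' ∧ h α = ζ} ∩ E) δ}}
          (Order.succ lam).ord := by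
  have hθ₁ : ℵ₀ ≤ θ₁ := ((aleph0_le_aleph 1).trans hθ.le).trans hθ₁θ
  have hlam : ℵ₀ ≤ lam := (hθ₁.trans (Order.le_succ θ₁)).trans hlamθ₁.le
  have hcof : (Order.succ lam).ord.cof = Order.succ lam := (isRegular_succ hlam).cof_ord
  have hι :
      #{γ : Ordinal // γ ≤ βs ∧ γ.cof = ℵ₀} < lift.{1} (Order.succ lam).ord.cof :=
    (mk_subtype_mono fun γ hγ => hγ.1 : _ ≤ #(Iic βs)).trans_lt <|
      (mk_Iic_lt_lift_of_lt_ord (hθ₁.trans (Order.le_succ θ₁)) hβs).trans <|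
        lift_lt.2 (hcof.symm ▸ hlamθ₁.trans (Order.lt_succ lam))
  let G (γ : {γ : Ordinal // γ ≤ βs ∧ γ.cof = ℵ₀}) (E : Set Ordinal) : Set Ordinal :=
    {δ | δ ∈ S₁ ∩ S₂ ∧ e δ ⊆ E ∧
      γ.1 = sSup {ζ | ζ < γ.1 ∧ IsStationaryIn ({α | α ∈ S' ∧ h α = ζ} ∩ E) δ}}
  have hG : ∀ γ, Monotone (G γ) := by
    rintro γ E E' hEE' δ ⟨hδS, hδe, hδsup⟩
    refine ⟨hδS, hδe.trans hEE', (csSup_eq_of_subset_of_subset_Iic ?_ (fun ζ hζ => hζ.1.le)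
      hδsup.symm).symm⟩
    exact fun ζ hζ => ⟨hζ.1, hζ.2.mono (inter_subset_inter_right _ hEE')⟩
  have hcover : ∀ E, IsClubIn E (Order.succ lam).ord → ∃ γ, (G γ E ∩ E).Nonempty := by
    intro E hE
    obtain ⟨δ, ⟨hδS, hδe, hδW⟩, hδE⟩ := hyp E hE E hE
    have hW := infinite_coe_iff.1 (Cardinal.infinite_iff.2 ((aleph0_le_lift.2 hθ₁).trans hδW))
    obtain ⟨γ, hγcof, hγ⟩ := hW.exists_cof_eq_aleph0_sSup_inter_Iio
    have hsup := csSup_eq_of_subset_of_subset_Iic (B := {ζ | ζ < γ ∧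
        IsStationaryIn ({α | α ∈ S' ∧ h α = ζ} ∩ E) δ})
      (fun ζ hζ => ⟨hζ.2, hζ.1.2.mono fun α hα => ⟨hα.2, hα.1.1⟩⟩)
      (fun ζ hζ => hζ.1.le) hγ
    exact ⟨⟨γ, hγ.ge.trans (csSup_le' fun ζ hζ => hζ.1.1), hγcof⟩, δ,
      ⟨hδS, hδe, hsup.symm⟩, hδE⟩
  obtain ⟨⟨γ, hγβs, hγcof⟩, hγ⟩ :=
    exists_forall_isStationaryIn_of_forall_isClubIn
      (by rw [hcof]; exact (hlam.trans_lt (Order.lt_succ lam)).ne') hι G hG hcover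
  exact ⟨γ, hγβs, hγcof, hγ⟩

/-- Subclaim 1.4. -/
theorem stmt_4
    (lam θ₁ θ : Cardinal.{0})
    (hlamreg : lam.IsRegular) (hlamθ₁ : Order.succ θ₁ < lam) (hθ₁θ : θ ≤ θ₁)
    (hθreg : θ.IsRegular) (hθ : Cardinal.aleph 1 < θ)
    (Sstar S₁ S₂ S' : Set Ordinal) (e : Ordinal → Set Ordinal)
    (hSsub : Sstar ⊆ cofSet θ (Order.succ lam).ord)
    (hSstat : IsStationaryIn Sstar (Order.succ lam).ord)
    (hS₁def : S₁ = {δ | δ < (Order.succ lam).ord ∧ δ.cof = Order.succ θ₁ ∧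
      IsStationaryIn (Sstar ∩ Set.Iio δ) δ})
    (hS₁stat : IsStationaryIn S₁ (Order.succ lam).ord)
    (hS₂ : ∀ δ ∈ S₂, δ < (Order.succ lam).ord ∧ Order.IsSuccLimit δ ∧ δ.cof ≤ Order.succ θ₁)
    (he_closed : ∀ δ ∈ S₂, e δ ⊆ Set.Iio δ ∧ IsClosedIn (e δ) δ ∧
      otp (e δ) ≤ (Order.succ θ₁).ord)
    (he_coh : ∀ δ ∈ S₂, ∀ β ∈ e δ, β ∈ S₂ ∧ e β = e δ ∩ Set.Iio β)
    (he_sup : ∀ δ ∈ S₂, δ.cof ≠ Cardinal.aleph 1 → sSup (e δ) = δ)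
    (hS₁S₂stat : IsStationaryIn (S₁ ∩ S₂) (Order.succ lam).ord)
    (hguess : ∀ E, IsClubIn E (Order.succ lam).ord →
      IsStationaryIn {δ | δ ∈ S₁ ∩ S₂ ∧ e δ ⊆ E} (Order.succ lam).ord)
    (hS'def : S' = Sstar ∩ S₂)
    (βs : Ordinal) (hβs : βs < (Order.succ θ₁).ord)
    (h : Ordinal → Ordinal) (hh : ∀ α ∈ S', h α ≤ βs)
    (hyp : ∀ E, IsClubIn E (Order.succ lam).ord →
      IsStationaryIn {δ | δ ∈ S₁ ∩ S₂ ∧ e δ ⊆ E ∧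
        Cardinal.lift.{1} θ₁ ≤ Cardinal.mk
          {ζ : Ordinal | ζ ≤ βs ∧
            IsStationaryIn (E ∩ Set.Iio δ ∩ {α | α ∈ S' ∧ h α = ζ}) δ}}
        (Order.succ lam).ord) :
    ∃ γs ≤ βs, γs.cof = Cardinal.aleph0 ∧
      ∀ E, IsClubIn E (Order.succ lam).ord →
        IsStationaryIn {δ | δ ∈ S₁ ∩ S₂ ∧ e δ ⊆ E ∧
          γs = sSup {ζ | ζ < γs ∧
            IsStationaryIn ({α | α ∈ S' ∧ h α = ζ} ∩ E) δ}}
          (Order.succ lam).ord :=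
  stmt_4_general lam θ₁ θ hlamθ₁ hθ₁θ hθ S₁ S₂ S' e βs hβs h hyp
end
end

section
/- Let λ be a regular uncountable cardinal and ⟨c_α : α < λ⁺⟩ a sequence such that for each limit ordinal α < λ⁺, c_α is a club of α with otp(c_α) ≤ λ, and c_{γ+1} = {γ} for each γ. For each limit ordinal δ < λ⁺ define C_δ^0 = c_δ and C_δ^{n+1} = C_δ^n ∪ {α : there exists β ∈ nacc(C_δ^n) with sup(β ∩ C_δ^n) < α < β and α ∈ c_β}. If δ < λ⁺ is a limit ordinal, γ ≤ λ is a limit ordinal, and otp(c_δ) ≤ γ, then for every n < ω we have otp(C_δ^n) ≤ λ^n · γ (ordinal exponentiation and multiplication, γ copies of λ^n). -/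
noncomputable section

/-! Every `α ∈ C^{n+1}` either lies in `C^n` or sits in `c_β` strictly inside the gap
`(sup (C^n ∩ β), β)` below some `β ∈ C^n`; in both cases `β = min (C^n \ α)`. Sending `α` to
`(otp (C^n ∩ β), otp (c_β ∩ α))` is a lexicographic embedding into `otp (C^n) × (λ + 1)`, so
`otp C^{n+1} ≤ (λ + 1) · λ^n · γ`, and `(λ + 1) · ξ = λ · ξ` for the limit ordinal `ξ = λ^n · γ`. -/

open Set Order Ordinal

theorem lift_otp {C : Set Ordinal} (hC : Small.{0} C) :
    Ordinal.lift.{1} (otp C) = typeLT C := by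
  rw [otp, dif_pos hC, ← lift_uzero (typeLT C)]
  exact @RelIso.ordinal_lift_type_eq _ _ _ _ (_) _ ⟨(equivShrink C).symm, Iff.rfl⟩

theorem otp_of_not_small {C : Set Ordinal} (hC : ¬Small.{0} C) : otp C = 0 := by
  rw [otp, dif_neg hC]

theorem otp_mono {C D : Set Ordinal} (hD : Small.{0} D) (hCD : C ⊆ D) : otp C ≤ otp D := by
  have hC : Small.{0} C := small_subset hCD
  rw [← lift_le.{1}, lift_otp hC, lift_otp hD]
  exact type_mono hCD

theorem otp_inter_Iio_lt {C : Set Ordinal} (hC : Small.{0} C) {a : Ordinal} (ha : a ∈ C) :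
    otp (C ∩ Iio a) < otp C := by
  have hCa : Small.{0} (C ∩ Iio a : Set Ordinal) := small_subset inter_subset_left
  let e : (C ∩ Iio a : Set Ordinal) ≃o Iio (⟨a, ha⟩ : C) :=
    { toFun := fun x => ⟨⟨x, x.2.1⟩, x.2.2⟩
      invFun := fun y => ⟨y.1, y.1.2, y.2⟩
      left_inv := fun _ => rfl
      right_inv := fun _ => rfl
      map_rel_iff' := Iff.rfl }
  rw [← lift_lt.{1}, lift_otp hCa, lift_otp hC, e.ordinalType_congr, type_Iio_lt]
  exact typein_lt_type _ _

theorem otp_inter_Iio_lt_otp_inter_Iio {C : Set Ordinal} {a b : Ordinal} (ha : a ∈ C)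
    (hab : a < b) : otp (C ∩ Iio a) < otp (C ∩ Iio b) := by
  have h := otp_inter_Iio_lt (C := C ∩ Iio b) (small_subset inter_subset_right) ⟨ha, hab⟩
  rwa [inter_assoc, Iio_inter_Iio, min_eq_right hab.le] at h

theorem otp_inter_Iio_mono (C : Set Ordinal) {a b : Ordinal} (hab : a ≤ b) :
    otp (C ∩ Iio a) ≤ otp (C ∩ Iio b) :=
  otp_mono (small_subset inter_subset_right) (inter_subset_inter_right C (Iio_subset_Iio hab))

theorem otp_le_of_strictMonoOn {C : Set Ordinal} {f : Ordinal → Ordinal} {b : Ordinal}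
    (hf : StrictMonoOn f C) (hfb : MapsTo f C (Iio b)) : otp C ≤ b := by
  by_cases hC : Small.{0} C
  · rw [← lift_le.{1}, lift_otp hC, ← type_lt_Iio, type_le_iff']
    exact ⟨(OrderEmbedding.ofStrictMono (fun x : C => (⟨f x, hfb x.2⟩ : Iio b))
      fun x y hxy => hf x.2 y.2 hxy).ltEmbedding⟩
  · rw [otp_of_not_small hC]
    exact zero_le

theorem otp_le_one_of_subsingleton {C : Set Ordinal} (hC : C.Subsingleton) : otp C ≤ 1 :=
  otp_le_of_strictMonoOn (f := fun _ => 0) (hC.strictMonoOn _) fun _ _ => mem_Iio.2 one_pos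

theorem add_one_mul_of_isSuccLimit {μ x : Ordinal} (hμ : 0 < μ) (hx : IsSuccLimit x) :
    (μ + 1) * x = μ * x := by
  have hωx := isSuccPrelimit_iff_omega0_dvd.1 hx.isSuccPrelimit
  refine le_antisymm ?_ (by gcongr; exact le_self_add)
  calc (μ + 1) * x ≤ (μ + μ) * x := by gcongr; exact one_le_iff_pos.2 hμ
    _ = μ * (2 * x) := by rw [← mul_assoc, ← one_add_one_eq_two, mul_add, mul_one]
    _ = μ * x := by rw [mul_omega0_dvd two_pos (natCast_lt_omega0 2) hωx]

theorem mul_add_lt_mul_of_lt {μ a b r : Ordinal} (hab : a < b) (hr : r < μ) :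
    μ * a + r < μ * b :=
  calc μ * a + r < μ * a + μ := by gcongr
    _ = μ * (a + 1) := by rw [mul_add_one]
    _ ≤ μ * b := by gcongr; exact add_one_le_iff.2 hab

theorem otp_le_mul_of_lex {E : Set Ordinal} {f r : Ordinal → Ordinal} {μ x : Ordinal}
    (hfx : ∀ a ∈ E, f a < x) (hrμ : ∀ a ∈ E, r a < μ)
    (hlex : ∀ a ∈ E, ∀ b ∈ E, a < b → f a < f b ∨ f a = f b ∧ r a < r b) :
    otp E ≤ μ * x := by
  refine otp_le_of_strictMonoOn (f := fun a => μ * f a + r a) ?_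
    fun a ha => mul_add_lt_mul_of_lt (hfx a ha) (hrμ a ha)
  intro a ha b hb hab
  rcases hlex a ha b hb hab with hf | ⟨hf, hr⟩
  · exact (mul_add_lt_mul_of_lt hf (hrμ a ha)).trans_le le_self_add
  · simp only [hf]
    gcongr

theorem csInf_inter_Ici_eq {X : Type*} [ConditionallyCompleteLinearOrder X] {D : Set X}
    {α β : X} (hβ : β ∈ D) (hαβ : α ≤ β) (hgap : ∀ d ∈ D, d < β → d < α) : sInf (D ∩ Ici α) = β :=
  IsLeast.csInf_eq ⟨⟨hβ, hαβ⟩, fun d hd => not_lt.1 fun hdβ => (hgap d hd.1 hdβ).not_ge hd.2⟩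

theorem otp_le_add_one_mul_of_subset_gaps {D E : Set Ordinal} (hD : Small.{0} D)
    {c : Ordinal → Set Ordinal} {μ x : Ordinal}
    (hc : ∀ β ∈ D, otp (c β ∩ Iio β) ≤ μ) (hDx : otp D ≤ x)
    (hE : E ⊆ D ∪ {α | ∃ β ∈ D, sSup (D ∩ Iio β) < α ∧ α < β ∧ α ∈ c β}) :
    otp E ≤ (μ + 1) * x := by
  -- `B α` is the point of `D` whose gap contains `α` (or `α` itself when `α ∈ D`).
  set B : Ordinal → Ordinal := fun α => sInf (D ∩ Ici α)
  have hB : ∀ α ∈ E, B α ∈ D ∧ α ≤ B α ∧ (α = B α ∨ α ∈ c (B α)) := by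
    intro α hα
    rcases hE hα with hαD | ⟨β, hβ, hsup, hαβ, hαc⟩
    · have hBα : B α = α := csInf_inter_Ici_eq hαD le_rfl fun _ _ => id
      exact ⟨by rwa [hBα], hBα.ge, Or.inl hBα.symm⟩
    · have hBα : B α = β := csInf_inter_Ici_eq hβ hαβ.le fun d hd hdβ =>
        (le_csSup (bddAbove_Iio.mono inter_subset_right) ⟨hd, hdβ⟩).trans_lt hsup
      exact ⟨hBα ▸ hβ, hBα ▸ hαβ.le, Or.inr (hBα ▸ hαc)⟩
  refine otp_le_mul_of_lex (f := fun α => otp (D ∩ Iio (B α)))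
    (r := fun α => otp (c (B α) ∩ Iio α)) ?_ ?_ ?_
  · intro α hα
    exact (otp_inter_Iio_lt hD (hB α hα).1).trans_le hDx
  · intro α hα
    exact lt_add_one_iff.2 ((otp_inter_Iio_mono _ (hB α hα).2.1).trans (hc _ (hB α hα).1))
  · intro α hα α' hα' hlt
    have hBmono : B α ≤ B α' := csInf_le' ⟨(hB α' hα').1, hlt.le.trans (hB α' hα').2.1⟩
    rcases hBmono.lt_or_eq with hBlt | hBeq
    · exact Or.inl (otp_inter_Iio_lt_otp_inter_Iio (hB α hα).1 hBlt)
    · refine Or.inr ⟨by rw [hBeq], ?_⟩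
      rcases (hB α hα).2.2 with hαB | hαc
      · exact absurd ((hB α' hα').2.1.trans (hBeq ▸ hαB.ge)) hlt.not_ge
      · simp only [← hBeq]
        exact otp_inter_Iio_lt_otp_inter_Iio hαc hlt

theorem otp_inter_Iio_self_le {c : Ordinal → Set Ordinal} {μ B β : Ordinal}
    (hμ : 0 < μ) (hc : ∀ α < B, IsSuccLimit α → IsClubIn (c α) α ∧ otp (c α) ≤ μ)
    (hcsucc : ∀ γ, c (γ + 1) = {γ}) (hβ : β < B) : otp (c β ∩ Iio β) ≤ μ := by
  have hsubsingleton : ∀ {S : Set Ordinal}, S.Subsingleton → otp S ≤ μ := fun hS =>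
    (otp_le_one_of_subsingleton hS).trans (one_le_iff_pos.2 hμ)
  rcases zero_or_succ_or_isSuccLimit β with rfl | ⟨γ, rfl⟩ | hlim
  · exact hsubsingleton (by simp)
  · rw [succ_eq_add_one, hcsucc]
    exact hsubsingleton (subsingleton_singleton.anti inter_subset_left)
  · rw [inter_eq_left.2 (hc β hβ hlim).1.1]
    exact (hc β hβ hlim).2

theorem stmt_7_general
    (lam : Cardinal.{0}) (hlamreg : lam.IsRegular)
    (c : Ordinal → Set Ordinal)
    (hc : ∀ α < (Order.succ lam).ord, Order.IsSuccLimit α →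
      IsClubIn (c α) α ∧ otp (c α) ≤ lam.ord)
    (hcsucc : ∀ γ : Ordinal, c (γ + 1) = {γ})
    (C : Ordinal → ℕ → Set Ordinal)
    (hC0 : ∀ δ, C δ 0 = c δ)
    (hCsucc : ∀ δ n, C δ (n + 1) = C δ n ∪
      {α | ∃ β ∈ naccSet (C δ n), sSup (C δ n ∩ Set.Iio β) < α ∧ α < β ∧ α ∈ c β})
    :
    ∀ δ < (Order.succ lam).ord, Order.IsSuccLimit δ →
      ∀ γ : Ordinal, Order.IsSuccLimit γ → γ ≤ lam.ord → otp (c δ) ≤ γ →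
        ∀ n : ℕ, otp (C δ n) ≤ lam.ord ^ (n : Ordinal) * γ := by
  intro δ hδ hδlim γ hγlim _ hotp n
  have hμ : 0 < lam.ord := Cardinal.ord_pos.2 hlamreg.pos
  have hsub : ∀ m, C δ m ⊆ Iio δ := by
    intro m
    induction m with
    | zero => rw [hC0]; exact (hc δ hδ hδlim).1.1
    | succ m ih =>
      rw [hCsucc]
      exact union_subset ih fun α ⟨β, hβ, _, hαβ, _⟩ => hαβ.trans (ih hβ.1)
  induction n with
  | zero => simpa [hC0] using hotp
  | succ n ih =>
    calc otp (C δ (n + 1)) ≤ (lam.ord + 1) * (lam.ord ^ (n : Ordinal) * γ) :=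
          otp_le_add_one_mul_of_subset_gaps (small_subset (hsub n))
            (fun β hβ => otp_inter_Iio_self_le hμ hc hcsucc ((hsub n hβ).trans hδ)) ih
            (hCsucc δ n ▸ union_subset_union_right _ fun α ⟨β, hβ, hα⟩ => ⟨β, hβ.1, hα⟩)
      _ = lam.ord ^ ((n + 1 : ℕ) : Ordinal) * γ := by
        rw [add_one_mul_of_isSuccLimit hμ (isSuccLimit_mul_right (opow_pos _ hμ) hγlim),
          ← mul_assoc, opow_natCast, opow_natCast, pow_succ']

/-- Refined order-type bound: if otp(c_δ) ≤ γ with γ ≤ λ limit, then otp(C_δ^n) ≤ λ^n·γ. -/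
theorem stmt_7
    (lam : Cardinal.{0}) (hlamreg : lam.IsRegular) (hlamunc : Cardinal.aleph0 < lam)
    (c : Ordinal → Set Ordinal)
    (hc : ∀ α < (Order.succ lam).ord, Order.IsSuccLimit α →
      IsClubIn (c α) α ∧ otp (c α) ≤ lam.ord)
    (hcsucc : ∀ γ : Ordinal, c (γ + 1) = {γ})
    (C : Ordinal → ℕ → Set Ordinal)
    (hC0 : ∀ δ, C δ 0 = c δ)
    (hCsucc : ∀ δ n, C δ (n + 1) = C δ n ∪
      {α | ∃ β ∈ naccSet (C δ n), sSup (C δ n ∩ Set.Iio β) < α ∧ α < β ∧ α ∈ c β})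
    :
    ∀ δ < (Order.succ lam).ord, Order.IsSuccLimit δ →
      ∀ γ : Ordinal, Order.IsSuccLimit γ → γ ≤ lam.ord → otp (c δ) ≤ γ →
        ∀ n : ℕ, otp (C δ n) ≤ lam.ord ^ (n : Ordinal) * γ :=
  stmt_7_general lam hlamreg c hc hcsucc C hC0 hCsucc
end
end
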